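/- Let ν > 0, b ≥ 0, α > 0 with ν + 1 − b > α, and set μ = (ν + 1 − b − α)/α > 0. Let ω(x) = T_ν (1 + x²/ν)^{−(ν+1−b)/2} for x ∈ ℝ, where T_s = Γ((s+1)/2)/(√(sπ)·Γ(s/2)). Then ‖ω^{1/α}‖_{L_1(ℝ)}^α = T_ν·(√ν/(T_μ √μ))^α. -/

import Mathlib

/-!
Raising `ω` to the power `1/α` turns the exponent `(ν+1-b)/2` into `(μ+1)/2`, so `ω^{1/α}` is
`T_ν^{1/α}` times an unnormalised Student density with `μ` degrees of freedom, stretched by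
`√(ν/μ)`; its integral is therefore `T_ν^{1/α} √ν / (T_μ √μ)`. The normalisation
`∫ (1 + x²)^{-s} = √π Γ(s - 1/2) / Γ(s)` comes from Euler's Beta integral after substituting
`x² = u / (1 - u)`.
-/

open MeasureTheory Real Set

/-- The normalizing constant `T_s = Γ((s+1)/2)/(√(sπ) Γ(s/2))` of the Student `t`-density. -/
noncomputable def studentConst (s : ℝ) : ℝ :=
  Real.Gamma ((s + 1) / 2) / (Real.sqrt (s * π) * Real.Gamma (s / 2))

theorem integral_rpow_mul_one_sub_rpow {p q : ℝ} (hp : 0 < p) (hq : 0 < q) :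
    ∫ u in (0 : ℝ)..1, u ^ (p - 1) * (1 - u) ^ (q - 1) = Gamma p * Gamma q / Gamma (p + q) := by
  have hcomplex : ((∫ u in (0 : ℝ)..1, u ^ (p - 1) * (1 - u) ^ (q - 1) : ℝ) : ℂ)
      = Complex.betaIntegral p q := by
    rw [Complex.betaIntegral, ← intervalIntegral.integral_ofReal]
    refine intervalIntegral.integral_congr fun u hu => ?_
    rw [uIcc_of_le zero_le_one] at hu
    simp only [Complex.ofReal_mul, Complex.ofReal_cpow hu.1,
      Complex.ofReal_cpow (sub_nonneg.2 hu.2)]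
    push_cast
    ring_nf
  apply Complex.ofReal_injective
  rw [hcomplex, Complex.betaIntegral_eq_Gamma_mul_div _ _ (by simpa) (by simpa)]
  push_cast
  simp only [← Complex.ofReal_add, Complex.Gamma_ofReal]

theorem image_div_one_sub_Ioo : (fun u : ℝ => u / (1 - u)) '' Ioo 0 1 = Ioi 0 := by
  ext t
  constructor
  · rintro ⟨u, ⟨hu0, hu1⟩, rfl⟩
    exact div_pos hu0 (sub_pos.2 hu1)
  · intro (ht : 0 < t)
    refine ⟨t / (1 + t), ⟨by positivity, (div_lt_one (by positivity)).2 (by linarith)⟩, ?_⟩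
    field_simp
    ring

theorem integral_Ioi_rpow_mul_one_add_rpow {p q : ℝ} (hp : 0 < p) (hq : 0 < q) :
    ∫ t in Ioi (0 : ℝ), t ^ (p - 1) * (1 + t) ^ (-(p + q))
      = Gamma p * Gamma q / Gamma (p + q) := by
  have hderiv : ∀ u ∈ Ioo (0 : ℝ) 1,
      HasDerivWithinAt (fun u => u / (1 - u)) (((1 - u) ^ 2)⁻¹) (Ioo 0 1) u := by
    intro u hu
    have hne : 1 - u ≠ 0 := (sub_pos.2 hu.2).ne'
    refine (((hasDerivAt_id' u).div ((hasDerivAt_const u 1).sub (hasDerivAt_id' u))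
      hne).congr_deriv ?_).hasDerivWithinAt
    simp only [Pi.sub_apply]
    field_simp
    ring
  have hmono : MonotoneOn (fun u : ℝ => u / (1 - u)) (Ioo 0 1) := fun u hu v hv huv =>
    div_le_div₀ hv.1.le huv (sub_pos.2 hv.2) (by linarith)
  rw [← image_div_one_sub_Ioo, integral_image_eq_integral_deriv_smul_of_monotoneOn
    measurableSet_Ioo hderiv hmono, ← integral_rpow_mul_one_sub_rpow hp hq,
    intervalIntegral.integral_of_le zero_le_one, integral_Ioc_eq_integral_Ioo]
  refine setIntegral_congr_fun measurableSet_Ioo fun u ⟨hu0, hu1⟩ => ?_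
  have h1u : 0 < 1 - u := sub_pos.2 hu1
  have h1f : 1 + u / (1 - u) = (1 - u)⁻¹ := by field_simp; ring
  simp only [smul_eq_mul, h1f, div_rpow hu0.le h1u.le, inv_rpow h1u.le, ← rpow_neg h1u.le,
    neg_neg]
  rw [show p + q = (p - 1) + (q - 1) + 2 by ring, rpow_add h1u, rpow_add h1u, rpow_two]
  field_simp

theorem integral_one_add_sq_rpow_neg {s : ℝ} (hs : 1 / 2 < s) :
    ∫ x : ℝ, (1 + x ^ 2) ^ (-s) = √π * Gamma (s - 1 / 2) / Gamma s := by
  have hsquare : ∀ x ∈ Ioi (0 : ℝ), (2 * x ^ ((2 : ℝ) - 1)) •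
      ((x ^ (2 : ℝ)) ^ ((1 / 2 : ℝ) - 1) * (1 + x ^ (2 : ℝ)) ^ (-(1 / 2 + (s - 1 / 2))))
        = 2 * (1 + x ^ 2) ^ (-s) := by
    intro x (hx : 0 < x)
    rw [← rpow_mul hx.le, rpow_two]
    norm_num [rpow_neg_one]
    field_simp
  calc ∫ x : ℝ, (1 + x ^ 2) ^ (-s)
      = ∫ x : ℝ, (fun t : ℝ => (1 + t ^ 2) ^ (-s)) |x| := by simp only [sq_abs]
    _ = ∫ x in Ioi (0 : ℝ), 2 * (1 + x ^ 2) ^ (-s) := by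
        rw [integral_comp_abs (f := fun t : ℝ => (1 + t ^ 2) ^ (-s)), integral_const_mul]
    _ = Gamma (1 / 2) * Gamma (s - 1 / 2) / Gamma (1 / 2 + (s - 1 / 2)) := by
        rw [← setIntegral_congr_fun measurableSet_Ioi hsquare,
          integral_comp_rpow_Ioi_of_pos
            (g := fun t => t ^ ((1 / 2 : ℝ) - 1) * (1 + t) ^ (-(1 / 2 + (s - 1 / 2)))) two_pos,
          integral_Ioi_rpow_mul_one_add_rpow one_half_pos (by linarith)]
    _ = √π * Gamma (s - 1 / 2) / Gamma s := by
        rw [Gamma_one_half_eq, add_sub_cancel]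

theorem integral_one_add_sq_div_rpow_neg {c s : ℝ} (hc : 0 < c) (hs : 1 / 2 < s) :
    ∫ x : ℝ, (1 + x ^ 2 / c) ^ (-s) = √c * (√π * Gamma (s - 1 / 2) / Gamma s) := by
  have hscale : ∀ x : ℝ, x ^ 2 / c = (x / √c) ^ 2 := fun x => by rw [div_pow, sq_sqrt hc.le]
  simp_rw [hscale]
  rw [Measure.integral_comp_div (fun y : ℝ => (1 + y ^ 2) ^ (-s)),
    integral_one_add_sq_rpow_neg hs, abs_of_pos (sqrt_pos.2 hc), smul_eq_mul]

theorem studentConst_pos {s : ℝ} (hs : 0 < s) : 0 < studentConst s := by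
  unfold studentConst
  have := Gamma_pos_of_pos (half_pos hs)
  have := Gamma_pos_of_pos (by linarith : 0 < (s + 1) / 2)
  positivity

theorem integral_one_add_sq_div_rpow_eq_studentConst {ν μ : ℝ} (hν : 0 < ν) (hμ : 0 < μ) :
    ∫ x : ℝ, (1 + x ^ 2 / ν) ^ (-((μ + 1) / 2)) = √ν / (studentConst μ * √μ) := by
  have := Gamma_pos_of_pos (half_pos hμ)
  have := Gamma_pos_of_pos (by linarith : 0 < (μ + 1) / 2)
  rw [integral_one_add_sq_div_rpow_neg hν (by linarith), studentConst, sqrt_mul hμ.le,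
    show (μ + 1) / 2 - 1 / 2 = μ / 2 by ring]
  field_simp

theorem stmt_19_general (ν b α : ℝ) (hν : 0 < ν) (hα : 0 < α)
    (h : α < ν + 1 - b) (μ : ℝ) (hμ : μ = (ν + 1 - b - α) / α)
    (ω : ℝ → ℝ)
    (hω : ω = fun x : ℝ => studentConst ν * (1 + x ^ 2 / ν) ^ (-((ν + 1 - b) / 2))) :
    (∫ x : ℝ, ω x ^ (1 / α)) ^ α
      = studentConst ν * (Real.sqrt ν / (studentConst μ * Real.sqrt μ)) ^ α := by
  have hμ_pos : 0 < μ := hμ ▸ div_pos (by linarith) hα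
  have hT : 0 < studentConst ν := studentConst_pos hν
  have hintegrand : ∀ x : ℝ,
      ω x ^ (1 / α) = studentConst ν ^ (1 / α) * (1 + x ^ 2 / ν) ^ (-((μ + 1) / 2)) := by
    intro x
    have hbase : 0 < 1 + x ^ 2 / ν := by positivity
    rw [hω, mul_rpow hT.le (rpow_nonneg hbase.le _), ← rpow_mul hbase.le, hμ]
    congr 2
    field_simp
    ring
  simp_rw [hintegrand]
  rw [integral_const_mul, integral_one_add_sq_div_rpow_eq_studentConst hν hμ_pos,
    mul_rpow (by positivity)
      (div_nonneg (sqrt_nonneg ν) (mul_nonneg (studentConst_pos hμ_pos).le (sqrt_nonneg μ))),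
    ← rpow_mul hT.le, one_div_mul_cancel hα.ne', rpow_one]

/-- For `ν > 0`, `b ≥ 0`, `0 < α < ν + 1 − b`, `μ = (ν + 1 − b − α)/α`, and the
weight `ω(x) = T_ν (1 + x²/ν)^{−(ν+1−b)/2}` arising from the Student `t`-density and
`ψ(x) = (1 + x²/ν)^{−b/2}`, one has `‖ω^{1/α}‖_{L₁(ℝ)}^α = T_ν (√ν/(T_μ √μ))^α`. -/
theorem stmt_19 (ν b α : ℝ) (hν : 0 < ν) (hb : 0 ≤ b) (hα : 0 < α)
    (h : α < ν + 1 - b) (μ : ℝ) (hμ : μ = (ν + 1 - b - α) / α)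
    (ω : ℝ → ℝ)
    (hω : ω = fun x : ℝ => studentConst ν * (1 + x ^ 2 / ν) ^ (-((ν + 1 - b) / 2))) :
    (∫ x : ℝ, ω x ^ (1 / α)) ^ α
      = studentConst ν * (Real.sqrt ν / (studentConst μ * Real.sqrt μ)) ^ α :=
  stmt_19_general ν b α hν hα h μ hμ ω hω
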